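/- Let ℓ ≥ 1 and let u = (u_n)_{n>ℓ} be a large-cluster solution on [0,T] with each u_n smooth, with large initial conditions, and let (S_k)_{k≥0} be the reaction classes determined by the initial data. Then for every j ≥ 0 and every n > ℓ: if n ∉ S_0 ∪ S_1 ∪ ⋯ ∪ S_j (i.e. the reaction number of n exceeds j, or n is not attainable), then the j-th derivative of u_n at t = 0 vanishes: u_n^{(j)}(0) = 0. -/

import Mathlib

open Finset Filter Topology
open scoped Nat

noncomputable section

/-- Total particle number for large clusters `m₁(t) = ∑_{i > ℓ} i u_i(t)`. -/
def m1large (ℓ : ℕ) (u : ℕ → ℝ → ℝ) (t : ℝ) : ℝ :=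
  ∑' i : ℕ, if ℓ + 1 ≤ i then (i : ℝ) * u i t else 0

/-- Right-hand side of the large-cluster equation for `u n` (`n > ℓ`):
`(1/m₁²) ∑_{i=ℓ+1}^{n−1} i(n+ℓ−i) u_i u_{n+ℓ−i} − 2 n u_n/m₁`
(the sum is empty when `n = ℓ+1`). -/
def largeRHS (ℓ : ℕ) (u : ℕ → ℝ → ℝ) (n : ℕ) (t : ℝ) : ℝ :=
  (1 / (m1large ℓ u t) ^ 2) *
      (∑ i ∈ Finset.Icc (ℓ + 1) (n - 1),
        (i : ℝ) * ((n + ℓ - i : ℕ) : ℝ) * u i t * u (n + ℓ - i) t)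
    - 2 * (n : ℝ) * u n t / m1large ℓ u t

/-- A large-cluster solution on `[0,T]`: a nonnegative family
`u_n ∈ C¹([0,T],[0,1])` (`n > ℓ`) solving the large-cluster system, whose
first-moment series converges uniformly on `[0,T]`. -/
structure IsLargeSolution (ℓ : ℕ) (T : ℝ) (u : ℕ → ℝ → ℝ) : Prop where
  mem : ∀ n, ℓ < n → ∀ t ∈ Set.Icc (0 : ℝ) T, u n t ∈ Set.Icc (0 : ℝ) 1
  contDiff : ∀ n, ℓ < n → ContDiffOn ℝ 1 (u n) (Set.Icc 0 T)
  ode : ∀ n, ℓ < n → ∀ t ∈ Set.Icc (0 : ℝ) T,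
    HasDerivWithinAt (u n) (largeRHS ℓ u n t) (Set.Icc 0 T) t
  m1_unif : TendstoUniformlyOn
    (fun N t => ∑ i ∈ Finset.range N, if ℓ + 1 ≤ i then (i : ℝ) * u i t else 0)
    (m1large ℓ u) atTop (Set.Icc 0 T)

/-- A pre-gelation large-cluster solution: in addition the second-moment series
`m₂(t) = ∑_{i > ℓ} i² u_i(t)` converges uniformly on `[0,T]`. -/
structure IsPreGelLargeSolution (ℓ : ℕ) (T : ℝ) (u : ℕ → ℝ → ℝ)
    extends IsLargeSolution ℓ T u : Prop where
  m2_unif : TendstoUniformlyOn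
    (fun N t => ∑ i ∈ Finset.range N, if ℓ + 1 ≤ i then (i : ℝ) ^ 2 * u i t else 0)
    (fun t => ∑' i : ℕ, if ℓ + 1 ≤ i then (i : ℝ) ^ 2 * u i t else 0)
    atTop (Set.Icc 0 T)

/-- `attained ℓ u0 k` is the union `S₀ ∪ ⋯ ∪ S_k` of the reaction classes
determined by the initial data `u0`. -/
def attained (ℓ : ℕ) (u0 : ℕ → ℝ) : ℕ → Set ℕ
  | 0 => {n | 1 ≤ n ∧ 0 < u0 n}
  | k + 1 => attained ℓ u0 k ∪
      {n | 1 ≤ n ∧ ∃ n₁ ∈ attained ℓ u0 k, ∃ n₂ ∈ attained ℓ u0 k,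
        n₁ + n₂ = n + ℓ}

/-- The `k`-th reaction class: `S₀ = {n : u0 n > 0}` and, for `k ≥ 1`,
`S_k = {n ∈ ℕ₊ : n ∉ S₀ ∪ ⋯ ∪ S_{k−1}` and `∃ n₁, n₂ ∈ S₀ ∪ ⋯ ∪ S_{k−1}` with
`n₁ + n₂ − ℓ = n}` (the condition `n₁ + n₂ − ℓ = n` is written `n₁ + n₂ = n + ℓ`,
which is equivalent since `n ≥ 1`). -/
def reactionClass (ℓ : ℕ) (u0 : ℕ → ℝ) : ℕ → Set ℕ
  | 0 => {n | 1 ≤ n ∧ 0 < u0 n}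
  | k + 1 => {n | 1 ≤ n ∧ n ∉ attained ℓ u0 k ∧
      ∃ n₁ ∈ attained ℓ u0 k, ∃ n₂ ∈ attained ℓ u0 k, n₁ + n₂ = n + ℓ}

/-! ### Auxiliary lemmas -/

lemma attained_mono' (ℓ : ℕ) (u0 : ℕ → ℝ) {a b : ℕ} (h : a ≤ b) :
    attained ℓ u0 a ⊆ attained ℓ u0 b := by
  induction b with
  | zero => simp [Nat.le_zero.mp h]
  | succ k ih =>
    rcases Nat.le_succ_iff.mp h with h' | h'
    · exact (ih h').trans (by intro x hx; exact Or.inl hx)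
    · simp [h']

lemma not_attained_of_not_reaction' (ℓ : ℕ) (u0 : ℕ → ℝ) {n j : ℕ}
    (h : ∀ i, i ≤ j → n ∉ reactionClass ℓ u0 i) : n ∉ attained ℓ u0 j := by
  induction j with
  | zero => exact h 0 le_rfl
  | succ k ih =>
    have hk : n ∉ attained ℓ u0 k := ih fun i hi => h i (hi.trans (Nat.le_succ k))
    intro hmem
    rcases hmem with hmem | hmem
    · exact hk hmem
    · exact h (k + 1) le_rfl ⟨hmem.1, hk, hmem.2⟩

lemma pair_not_attained' (ℓ : ℕ) (u0 : ℕ → ℝ) {n j n₁ n₂ : ℕ} (hn : 1 ≤ n)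
    (hA : n ∉ attained ℓ u0 (j + 1)) (hsum : n₁ + n₂ = n + ℓ) :
    n₁ ∉ attained ℓ u0 j ∨ n₂ ∉ attained ℓ u0 j := by
  by_contra hc
  push_neg at hc
  exact hA (Or.inr ⟨hn, n₁, hc.1, n₂, hc.2, hsum⟩)

/-- If a smooth function on `[0,T]` is `O(t^(j+1))` near `0⁺`, then its iterated derivatives
up to order `j` vanish at `0`. -/
lemma vanish_of_bound' {T T' C : ℝ} (hT : 0 < T) {f : ℝ → ℝ}
    (hf : ContDiffOn ℝ (⊤ : ℕ∞) f (Set.Icc 0 T)) (hT' : 0 < T') (hT'T : T' ≤ T)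
    {j : ℕ} (hb : ∀ t ∈ Set.Icc (0:ℝ) T', |f t| ≤ C * t ^ (j + 1)) :
    ∀ k, k ≤ j → iteratedDerivWithin k f (Set.Icc 0 T) 0 = 0 := by
  intro k
  induction k using Nat.strong_induction_on with
  | _ k ih =>
    intro hkj
    have hUD : UniqueDiffOn ℝ (Set.Icc (0:ℝ) T) := uniqueDiffOn_Icc hT
    have hcont : ContinuousOn (iteratedDerivWithin (k + 1) f (Set.Icc 0 T)) (Set.Icc 0 T) :=
      hf.continuousOn_iteratedDerivWithin (by exact_mod_cast le_top) hUD
    obtain ⟨M, hM⟩ := (isCompact_Icc).exists_bound_of_continuousOn hcont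
    have hM0 : 0 ≤ M := le_trans (abs_nonneg _) (by simpa using hM 0 (Set.left_mem_Icc.2 hT.le))
    have htay : ∀ x ∈ Set.Icc (0:ℝ) T,
        ‖f x - taylorWithinEval f k (Set.Icc 0 T) 0 x‖ ≤ M * (x - 0) ^ (k + 1) / (k ! : ℝ) :=
      fun x hx => taylor_mean_remainder_bound hT.le (hf.of_le (by exact_mod_cast le_top)) hx
        (fun y hy => by simpa using hM y hy)
    set D := iteratedDerivWithin k f (Set.Icc 0 T) 0 with hD
    have hpoly : ∀ x : ℝ, taylorWithinEval f k (Set.Icc 0 T) 0 x = ((k ! : ℝ)⁻¹ * x ^ k) * D := by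
      intro x
      rw [taylor_within_apply, Finset.sum_range_succ]
      have : ∀ i ∈ Finset.range k, ((i ! : ℝ)⁻¹ * (x - 0) ^ i) •
          iteratedDerivWithin i f (Set.Icc 0 T) 0 = 0 := by
        intro i hi
        rw [ih i (Finset.mem_range.mp hi) ((Finset.mem_range.mp hi).le.trans hkj)]
        simp
      rw [Finset.sum_eq_zero this]
      simp [smul_eq_mul]
      exact Or.inl hD.symm
    have hCnn : 0 ≤ C := by
      have := hb T' ⟨hT'.le, le_rfl⟩
      nlinarith [abs_nonneg (f T'), pow_pos hT' (j+1)]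
    have key : ∀ x ∈ Set.Ioc (0:ℝ) (min T' 1),
        |D| ≤ ((k ! : ℝ) * C + M * ((k:ℝ)+1)) * x := by
      intro x hx
      have hx0 : 0 < x := hx.1
      have hx1 : x ≤ 1 := hx.2.trans (min_le_right _ _)
      have hxT' : x ≤ T' := hx.2.trans (min_le_left _ _)
      have hxT : x ∈ Set.Icc (0:ℝ) T := ⟨hx0.le, hxT'.trans hT'T⟩
      have h1 := htay x hxT
      rw [hpoly] at h1
      have h2 : |((k ! : ℝ)⁻¹ * x ^ k) * D| ≤ |f x| + M * x ^ (k+1) / (k ! : ℝ) := by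
        have habs : |((k ! : ℝ)⁻¹ * x ^ k) * D - f x| = ‖f x - ((k ! : ℝ)⁻¹ * x ^ k) * D‖ := by
          rw [Real.norm_eq_abs, abs_sub_comm]
        rw [sub_zero] at h1
        calc |((k ! : ℝ)⁻¹ * x ^ k) * D|
            ≤ |f x| + |((k ! : ℝ)⁻¹ * x ^ k) * D - f x| := by
              have := abs_add_le (f x) (((k ! : ℝ)⁻¹ * x ^ k) * D - f x)
              simp at this ⊢; linarith [this]
          _ ≤ |f x| + M * x ^ (k+1) / (k ! : ℝ) := by rw [habs]; linarith [h1]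
      have hkfac : (0:ℝ) < (k ! : ℝ) := by positivity
      have hxk : (0:ℝ) < x ^ k := pow_pos hx0 k
      have habsD : |((k ! : ℝ)⁻¹ * x ^ k) * D| = (k ! : ℝ)⁻¹ * x ^ k * |D| := by
        rw [abs_mul]
        congr 1
        rw [abs_of_pos (by positivity)]
      rw [habsD] at h2
      have hfx : |f x| ≤ C * x ^ (j+1) := hb x ⟨hx0.le, hxT'⟩
      have hxj : x ^ (j + 1) ≤ x ^ (k + 1) := pow_le_pow_of_le_one hx0.le hx1 (by omega)
      have h3 : (k ! : ℝ)⁻¹ * x ^ k * |D| ≤ C * x ^ (k+1) + M * x ^ (k+1) / (k ! : ℝ) := by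
        calc (k ! : ℝ)⁻¹ * x ^ k * |D| ≤ |f x| + M * x ^ (k+1) / (k ! : ℝ) := h2
          _ ≤ C * x ^ (j+1) + M * x ^ (k+1) / (k ! : ℝ) := by linarith [hfx]
          _ ≤ C * x ^ (k+1) + M * x ^ (k+1) / (k ! : ℝ) := by nlinarith [hxj, hCnn]
      have hpow : x ^ (k + 1) = x ^ k * x := pow_succ x k
      have hkne : (k ! : ℝ) ≠ 0 := hkfac.ne'
      have h6 := mul_le_mul_of_nonneg_left h3 hkfac.le
      have e1 : (k ! : ℝ) * ((k ! : ℝ)⁻¹ * x ^ k * |D|) = x ^ k * |D| := by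
        field_simp
      have e2 : (k ! : ℝ) * (C * x ^ (k+1) + M * x ^ (k+1) / (k ! : ℝ)) =
          (k ! : ℝ) * C * x ^ (k+1) + M * x ^ (k+1) := by
        field_simp
      rw [e1, e2, hpow] at h6
      have h7 : x ^ k * |D| ≤ x ^ k * (((k ! : ℝ) * C + M) * x) := by nlinarith [h6]
      have h8 : |D| ≤ ((k ! : ℝ) * C + M) * x := le_of_mul_le_mul_left h7 hxk
      have h9 : ((k ! : ℝ) * C + M) * x ≤ ((k ! : ℝ) * C + M * ((k:ℝ)+1)) * x := by
        nlinarith [mul_nonneg (mul_nonneg hM0 (Nat.cast_nonneg (α := ℝ) k)) hx0.le]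
      linarith
    have hlim : Tendsto (fun x : ℝ => ((k ! : ℝ) * C + M * ((k:ℝ)+1)) * x)
        (𝓝[>] (0:ℝ)) (𝓝 0) := by
      have : Tendsto (fun x : ℝ => ((k ! : ℝ) * C + M * ((k:ℝ)+1)) * x) (𝓝 (0:ℝ))
          (𝓝 (((k ! : ℝ) * C + M * ((k:ℝ)+1)) * 0)) :=
        (continuous_const.mul continuous_id).tendsto 0
      simpa using this.mono_left nhdsWithin_le_nhds
    have hev : ∀ᶠ x in 𝓝[>] (0:ℝ), |D| ≤ ((k ! : ℝ) * C + M * ((k:ℝ)+1)) * x := by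
      filter_upwards [Ioc_mem_nhdsGT (lt_min hT' one_pos)] with x hx
      exact key x hx
    have : |D| ≤ 0 := ge_of_tendsto hlim hev
    exact abs_nonpos_iff.mp this

/-- Growth bound: if the interaction sum is `≤ D s^p` on `[0,T']`, `m₁ ≥ 1/2` there,
and `u n 0 = 0`, then `u n t ≤ 4 D t^(p+1)` on `[0,T']`. -/
lemma grow_bound' (ℓ : ℕ) (T : ℝ) (u : ℕ → ℝ → ℝ)
    (hmem : ∀ n, ℓ < n → ∀ t ∈ Set.Icc (0 : ℝ) T, u n t ∈ Set.Icc (0 : ℝ) 1)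
    (hcd : ∀ n, ℓ < n → ContDiffOn ℝ 1 (u n) (Set.Icc 0 T))
    (hode : ∀ n, ℓ < n → ∀ t ∈ Set.Icc (0 : ℝ) T,
      HasDerivWithinAt (u n) (largeRHS ℓ u n t) (Set.Icc 0 T) t)
    {T' : ℝ} (hT'0 : 0 < T') (hT'T : T' ≤ T)
    (hm : ∀ t ∈ Set.Icc (0 : ℝ) T', 1/2 ≤ m1large ℓ u t)
    {n : ℕ} (hn : ℓ < n) (hn0 : u n 0 = 0) {D : ℝ} (hD0 : 0 ≤ D) {p : ℕ}
    (hS : ∀ s ∈ Set.Icc (0 : ℝ) T',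
      (∑ i ∈ Finset.Icc (ℓ + 1) (n - 1),
        (i : ℝ) * ((n + ℓ - i : ℕ) : ℝ) * u i s * u (n + ℓ - i) s) ≤ D * s ^ p) :
    ∀ t ∈ Set.Icc (0 : ℝ) T', u n t ≤ 4 * D * t ^ (p + 1) := by
  intro t ht
  set h : ℝ → ℝ := fun s => 4 * D * s ^ (p + 1) - u n s with hh
  have hsub : Set.Icc (0:ℝ) T' ⊆ Set.Icc (0:ℝ) T := Set.Icc_subset_Icc le_rfl hT'T
  have hcont : ContinuousOn h (Set.Icc 0 T') := by
    apply ContinuousOn.sub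
    · exact (continuous_const.mul (continuous_pow (p+1))).continuousOn
    · exact ((hcd n hn).continuousOn).mono hsub
  have hmono : MonotoneOn h (Set.Icc 0 T') := by
    apply monotoneOn_of_deriv_nonneg (convex_Icc 0 T') hcont
    · rw [interior_Icc]
      intro x hx
      have hxT : x ∈ Set.Icc (0:ℝ) T := hsub ⟨hx.1.le, hx.2.le⟩
      have hdu : HasDerivAt (u n) (largeRHS ℓ u n x) x :=
        (hode n hn x hxT).hasDerivAt (Icc_mem_nhds hx.1 (lt_of_lt_of_le hx.2 hT'T))
      have : HasDerivAt h (4 * D * ((p+1 : ℕ) * x ^ p) - largeRHS ℓ u n x) x := by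
        have h1 : HasDerivAt (fun s : ℝ => 4 * D * s ^ (p+1)) (4 * D * ((p+1 : ℕ) * x ^ p)) x := by
          simpa using (hasDerivAt_pow (p+1) x).const_mul (4 * D)
        exact h1.sub hdu
      exact this.differentiableAt.differentiableWithinAt
    · rw [interior_Icc]
      intro x hx
      have hxT : x ∈ Set.Icc (0:ℝ) T := hsub ⟨hx.1.le, hx.2.le⟩
      have hxT' : x ∈ Set.Icc (0:ℝ) T' := ⟨hx.1.le, hx.2.le⟩
      have hdu : HasDerivAt (u n) (largeRHS ℓ u n x) x :=
        (hode n hn x hxT).hasDerivAt (Icc_mem_nhds hx.1 (lt_of_lt_of_le hx.2 hT'T))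
      have hdh : HasDerivAt h (4 * D * ((p+1 : ℕ) * x ^ p) - largeRHS ℓ u n x) x := by
        have h1 : HasDerivAt (fun s : ℝ => 4 * D * s ^ (p+1)) (4 * D * ((p+1 : ℕ) * x ^ p)) x := by
          simpa using (hasDerivAt_pow (p+1) x).const_mul (4 * D)
        exact h1.sub hdu
      rw [hdh.deriv]
      have hm' : 1/2 ≤ m1large ℓ u x := hm x hxT'
      have hmpos : 0 < m1large ℓ u x := lt_of_lt_of_le (by norm_num) hm'
      have hSx := hS x hxT'
      have hSnn : 0 ≤ ∑ i ∈ Finset.Icc (ℓ + 1) (n - 1),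
          (i : ℝ) * ((n + ℓ - i : ℕ) : ℝ) * u i x * u (n + ℓ - i) x := by
        apply Finset.sum_nonneg
        intro i hi
        rw [Finset.mem_Icc] at hi
        have hi1 : ℓ < i := hi.1
        have hi2 : ℓ < n + ℓ - i := by omega
        have h1 := (hmem i hi1 x hxT).1
        have h2 := (hmem (n + ℓ - i) hi2 x hxT).1
        positivity
      have hinv : 1 / (m1large ℓ u x) ^ 2 ≤ 4 := by
        rw [div_le_iff₀ (pow_pos hmpos 2)]
        nlinarith [hm']
      have hun : 0 ≤ u n x := (hmem n hn x hxT).1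
      have hrhs : largeRHS ℓ u n x ≤ 4 * D * x ^ p := by
        unfold largeRHS
        have ht1 : (1 / (m1large ℓ u x) ^ 2) *
            (∑ i ∈ Finset.Icc (ℓ + 1) (n - 1),
              (i : ℝ) * ((n + ℓ - i : ℕ) : ℝ) * u i x * u (n + ℓ - i) x) ≤ 4 * (D * x ^ p) := by
          calc (1 / (m1large ℓ u x) ^ 2) * _ ≤ 4 * (∑ i ∈ Finset.Icc (ℓ + 1) (n - 1),
              (i : ℝ) * ((n + ℓ - i : ℕ) : ℝ) * u i x * u (n + ℓ - i) x) :=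
                mul_le_mul_of_nonneg_right hinv hSnn
            _ ≤ 4 * (D * x ^ p) := by linarith [hSx]
        have ht2 : 0 ≤ 2 * (n : ℝ) * u n x / m1large ℓ u x :=
          div_nonneg (mul_nonneg (by positivity) hun) hmpos.le
        linarith
      have hpx : 0 ≤ x ^ p := pow_nonneg hx.1.le p
      have : largeRHS ℓ u n x ≤ 4 * D * ((p+1 : ℕ) * x ^ p) := by
        calc largeRHS ℓ u n x ≤ 4 * D * x ^ p := hrhs
          _ ≤ 4 * D * ((p+1 : ℕ) * x ^ p) := by
              have : (1:ℝ) * x ^ p ≤ ((p:ℝ)+1) * x ^ p := by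
                apply mul_le_mul_of_nonneg_right _ hpx
                have : (0:ℝ) ≤ (p:ℝ) := Nat.cast_nonneg p
                linarith
              push_cast
              nlinarith [hD0]
      linarith
  have h0 : h 0 ≤ h t := hmono (Set.left_mem_Icc.2 hT'0.le) ht ht.1
  have : h 0 = 0 := by simp [hh, hn0]
  rw [this] at h0
  simp only [hh] at h0
  linarith

/-- `m₁` is bounded below by `1/2` on a small initial interval. -/
lemma m1_lower' (ℓ : ℕ) (T : ℝ) (hT : 0 < T) (u : ℕ → ℝ → ℝ)
    (hcd : ∀ n, ℓ < n → ContDiffOn ℝ 1 (u n) (Set.Icc 0 T))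
    (hunif : TendstoUniformlyOn
      (fun N t => ∑ i ∈ Finset.range N, if ℓ + 1 ≤ i then (i : ℝ) * u i t else 0)
      (m1large ℓ u) atTop (Set.Icc 0 T))
    (hinit_nonneg : ∀ i, 0 ≤ u i 0)
    (hinit_sum : HasSum (fun i : ℕ => if ℓ + 1 ≤ i then u i 0 else 0) 1) :
    ∃ T', 0 < T' ∧ T' ≤ T ∧ ∀ t ∈ Set.Icc (0:ℝ) T', 1/2 ≤ m1large ℓ u t := by
  have h0T : (0:ℝ) ∈ Set.Icc (0:ℝ) T := Set.left_mem_Icc.2 hT.le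
  have hcontm : ContinuousOn (m1large ℓ u) (Set.Icc 0 T) := by
    apply hunif.continuousOn
    apply Filter.Eventually.frequently
    filter_upwards with N
    apply continuousOn_finset_sum
    intro i _
    by_cases hi : ℓ + 1 ≤ i
    · simp only [hi, if_true]
      exact continuous_const.continuousOn.mul ((hcd i hi).continuousOn)
    · simp only [hi, if_false]
      exact continuousOn_const
  have hge1 : 1 ≤ m1large ℓ u 0 := by
    have htend : Tendsto (fun N => ∑ i ∈ Finset.range N,
        if ℓ + 1 ≤ i then (i : ℝ) * u i 0 else 0) atTop (𝓝 (m1large ℓ u 0)) :=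
      hunif.tendsto_at h0T
    have hnn : ∀ i, 0 ≤ (if ℓ + 1 ≤ i then (i : ℝ) * u i 0 else 0) := by
      intro i
      by_cases hi : ℓ + 1 ≤ i <;> simp [hi]
      exact mul_nonneg (Nat.cast_nonneg i) (hinit_nonneg i)
    have hhs : HasSum (fun i : ℕ => if ℓ + 1 ≤ i then (i : ℝ) * u i 0 else 0) (m1large ℓ u 0) :=
      (hasSum_iff_tendsto_nat_of_nonneg hnn _).mpr htend
    refine hasSum_le ?_ hinit_sum hhs
    intro i
    by_cases hi : ℓ + 1 ≤ i <;> simp [hi]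
    have h1i : (1:ℝ) ≤ (i:ℝ) := by exact_mod_cast Nat.one_le_iff_ne_zero.mpr (by omega)
    nlinarith [hinit_nonneg i]
  have hev : ∀ᶠ t in 𝓝[Set.Icc (0:ℝ) T] 0, 1/2 < m1large ℓ u t := by
    have := (hcontm 0 h0T).tendsto
    exact this.eventually (eventually_gt_nhds (by linarith))
  obtain ⟨ε, hε, hball⟩ := Metric.mem_nhdsWithin_iff.mp hev
  refine ⟨min (ε/2) T, lt_min (by linarith) hT, min_le_right _ _, ?_⟩
  intro t ht
  have htT : t ∈ Set.Icc (0:ℝ) T := ⟨ht.1, le_trans ht.2 (min_le_right _ _)⟩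
  have hdist : t ∈ Metric.ball (0:ℝ) ε := by
    rw [Metric.mem_ball, Real.dist_eq, sub_zero, abs_of_nonneg ht.1]
    calc t ≤ min (ε/2) T := ht.2
      _ ≤ ε/2 := min_le_left _ _
      _ < ε := by linarith
  exact (hball ⟨hdist, htT⟩).le

/-- let `ℓ ≥ 1` and let `u` be a smooth large-cluster solution on
`[0,T]` with large initial conditions.  If `n > ℓ` does not lie in
`S₀ ∪ ⋯ ∪ S_j`, then the `j`-th derivative of `u_n` at `t = 0` vanishes. -/
theorem large_reaction_class_vanishing (ℓ : ℕ) (hℓ : 1 ≤ ℓ) (T : ℝ) (hT : 0 < T)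
    (u : ℕ → ℝ → ℝ) (hsol : IsLargeSolution ℓ T u)
    (hsmooth : ∀ n, ℓ < n → ContDiffOn ℝ (⊤ : ℕ∞) (u n) (Set.Icc 0 T))
    (hinit_small : ∀ i, i ≤ ℓ → u i 0 = 0)
    (hinit_nonneg : ∀ i, 0 ≤ u i 0)
    (hinit_sum : HasSum (fun i : ℕ => if ℓ + 1 ≤ i then u i 0 else 0) 1) :
    ∀ j : ℕ, ∀ n : ℕ, ℓ < n →
      (∀ i, i ≤ j → n ∉ reactionClass ℓ (fun m => u m 0) i) →
      iteratedDerivWithin j (u n) (Set.Icc 0 T) 0 = 0 := by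
  intro j n hn hnot
  set u0 : ℕ → ℝ := fun m => u m 0 with hu0
  have hnA : n ∉ attained ℓ u0 j := not_attained_of_not_reaction' ℓ u0 hnot
  obtain ⟨T', hT'0, hT'T, hm⟩ :=
    m1_lower' ℓ T hT u hsol.contDiff hsol.m1_unif hinit_nonneg hinit_sum
  -- initial vanishing for non-attained indices
  have hzero : ∀ (k m : ℕ), 1 ≤ m → m ∉ attained ℓ u0 k → u m 0 = 0 := by
    intro k m h1 hmA
    have hmA0 : m ∉ attained ℓ u0 0 := fun h => hmA (attained_mono' ℓ u0 (Nat.zero_le k) h)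
    by_contra hne
    exact hmA0 ⟨h1, lt_of_le_of_ne (hinit_nonneg m) (Ne.symm hne)⟩
  -- the key quantitative bound, by induction on the reaction level
  have key : ∀ k : ℕ, ∀ m : ℕ, ℓ < m → m ∉ attained ℓ u0 k →
      ∃ C, 0 ≤ C ∧ ∀ t ∈ Set.Icc (0:ℝ) T', u m t ≤ C * t ^ (k + 1) := by
    intro k
    induction k with
    | zero =>
      intro m hm' hmA
      have hm0 : u m 0 = 0 := hzero 0 m (by omega) hmA
      refine ⟨4 * ((m : ℝ) * ((m : ℝ) + ℓ) ^ 2), by positivity, ?_⟩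
      have hS : ∀ s ∈ Set.Icc (0:ℝ) T',
          (∑ i ∈ Finset.Icc (ℓ + 1) (m - 1),
            (i : ℝ) * ((m + ℓ - i : ℕ) : ℝ) * u i s * u (m + ℓ - i) s)
            ≤ ((m : ℝ) * ((m : ℝ) + ℓ) ^ 2) * s ^ 0 := by
        intro s hs
        have hsT : s ∈ Set.Icc (0:ℝ) T := ⟨hs.1, hs.2.trans hT'T⟩
        rw [pow_zero, mul_one]
        have hterm : ∀ i ∈ Finset.Icc (ℓ + 1) (m - 1),
            (i : ℝ) * ((m + ℓ - i : ℕ) : ℝ) * u i s * u (m + ℓ - i) s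
              ≤ ((m : ℝ) + ℓ) ^ 2 := by
          intro i hi
          rw [Finset.mem_Icc] at hi
          have hiℓ : ℓ < i := hi.1
          have hqℓ : ℓ < m + ℓ - i := by omega
          have hui := hsol.mem i hiℓ s hsT
          have huq := hsol.mem (m + ℓ - i) hqℓ s hsT
          have h1 : (i : ℝ) ≤ (m : ℝ) + ℓ := by
            have : i ≤ m + ℓ := by omega
            exact_mod_cast this
          have h2 : ((m + ℓ - i : ℕ) : ℝ) ≤ (m : ℝ) + ℓ := by
            have : m + ℓ - i ≤ m + ℓ := by omega
            exact_mod_cast this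
          have hpq : (i : ℝ) * ((m + ℓ - i : ℕ) : ℝ) ≤ ((m : ℝ) + ℓ) ^ 2 := by
            nlinarith [Nat.cast_nonneg (α := ℝ) i, Nat.cast_nonneg (α := ℝ) (m + ℓ - i)]
          have hprod : u i s * u (m + ℓ - i) s ≤ 1 := by
            nlinarith [hui.1, hui.2, huq.1, huq.2]
          have hprodnn : 0 ≤ u i s * u (m + ℓ - i) s := mul_nonneg hui.1 huq.1
          calc (i : ℝ) * ((m + ℓ - i : ℕ) : ℝ) * u i s * u (m + ℓ - i) s
              = ((i : ℝ) * ((m + ℓ - i : ℕ) : ℝ)) * (u i s * u (m + ℓ - i) s) := by ring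
            _ ≤ ((m : ℝ) + ℓ) ^ 2 * 1 :=
                mul_le_mul hpq hprod hprodnn (by positivity)
            _ = ((m : ℝ) + ℓ) ^ 2 := mul_one _
        calc (∑ i ∈ Finset.Icc (ℓ + 1) (m - 1),
              (i : ℝ) * ((m + ℓ - i : ℕ) : ℝ) * u i s * u (m + ℓ - i) s)
            ≤ ∑ _i ∈ Finset.Icc (ℓ + 1) (m - 1), ((m : ℝ) + ℓ) ^ 2 :=
              Finset.sum_le_sum hterm
          _ = (Finset.Icc (ℓ + 1) (m - 1)).card * ((m : ℝ) + ℓ) ^ 2 := by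
              rw [Finset.sum_const, nsmul_eq_mul]
          _ ≤ (m : ℝ) * ((m : ℝ) + ℓ) ^ 2 := by
              apply mul_le_mul_of_nonneg_right _ (by positivity)
              have : (Finset.Icc (ℓ + 1) (m - 1)).card ≤ m := by
                rw [Nat.card_Icc]; omega
              exact_mod_cast this
      have hb := grow_bound' ℓ T u hsol.mem hsol.contDiff hsol.ode hT'0 hT'T hm hm' hm0
        (by positivity) hS
      intro t ht
      simpa using hb t ht
    | succ k ih =>
      intro m hm' hmA
      have hm0 : u m 0 = 0 := hzero (k+1) m (by omega) hmA
      -- bound each product in the interaction sum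
      have hprodbd : ∀ i : ℕ, ∃ C, 0 ≤ C ∧ (i ∈ Finset.Icc (ℓ + 1) (m - 1) →
          ∀ s ∈ Set.Icc (0:ℝ) T', u i s * u (m + ℓ - i) s ≤ C * s ^ (k + 1)) := by
        intro i
        by_cases hi : i ∈ Finset.Icc (ℓ + 1) (m - 1)
        · rw [Finset.mem_Icc] at hi
          have hiℓ : ℓ < i := hi.1
          have hqℓ : ℓ < m + ℓ - i := by omega
          have hsum : i + (m + ℓ - i) = m + ℓ := by omega
          rcases pair_not_attained' ℓ u0 (show 1 ≤ m by omega) hmA hsum with hp | hp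
          · obtain ⟨C, hC0, hCb⟩ := ih i hiℓ hp
            refine ⟨C, hC0, fun _ s hs => ?_⟩
            have hsT : s ∈ Set.Icc (0:ℝ) T := ⟨hs.1, hs.2.trans hT'T⟩
            have h2 := hsol.mem (m + ℓ - i) hqℓ s hsT
            calc u i s * u (m + ℓ - i) s ≤ (C * s ^ (k+1)) * 1 :=
                  mul_le_mul (hCb s hs) h2.2 h2.1
                    (mul_nonneg hC0 (pow_nonneg hs.1 _))
              _ = C * s ^ (k+1) := mul_one _
          · obtain ⟨C, hC0, hCb⟩ := ih (m + ℓ - i) hqℓ hp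
            refine ⟨C, hC0, fun _ s hs => ?_⟩
            have hsT : s ∈ Set.Icc (0:ℝ) T := ⟨hs.1, hs.2.trans hT'T⟩
            have h1 := hsol.mem i hiℓ s hsT
            have h2 := hsol.mem (m + ℓ - i) hqℓ s hsT
            calc u i s * u (m + ℓ - i) s ≤ 1 * (C * s ^ (k+1)) :=
                  mul_le_mul h1.2 (hCb s hs) h2.1 one_pos.le
              _ = C * s ^ (k+1) := one_mul _
        · exact ⟨0, le_rfl, fun h => absurd h hi⟩
      choose Cf hCf0 hCfb using hprodbd
      set D : ℝ := ∑ i ∈ Finset.Icc (ℓ + 1) (m - 1), ((m : ℝ) + ℓ) ^ 2 * Cf i with hDdef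
      have hD0 : 0 ≤ D :=
        Finset.sum_nonneg fun i _ => mul_nonneg (by positivity) (hCf0 i)
      have hS : ∀ s ∈ Set.Icc (0:ℝ) T',
          (∑ i ∈ Finset.Icc (ℓ + 1) (m - 1),
            (i : ℝ) * ((m + ℓ - i : ℕ) : ℝ) * u i s * u (m + ℓ - i) s)
            ≤ D * s ^ (k + 1) := by
        intro s hs
        have hsT : s ∈ Set.Icc (0:ℝ) T := ⟨hs.1, hs.2.trans hT'T⟩
        have hterm : ∀ i ∈ Finset.Icc (ℓ + 1) (m - 1),
            (i : ℝ) * ((m + ℓ - i : ℕ) : ℝ) * u i s * u (m + ℓ - i) s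
              ≤ ((m : ℝ) + ℓ) ^ 2 * Cf i * s ^ (k + 1) := by
          intro i hi
          have hib := hCfb i hi s hs
          rw [Finset.mem_Icc] at hi
          have hiℓ : ℓ < i := hi.1
          have hqℓ : ℓ < m + ℓ - i := by omega
          have hui := hsol.mem i hiℓ s hsT
          have huq := hsol.mem (m + ℓ - i) hqℓ s hsT
          have h1 : (i : ℝ) ≤ (m : ℝ) + ℓ := by
            have : i ≤ m + ℓ := by omega
            exact_mod_cast this
          have h2 : ((m + ℓ - i : ℕ) : ℝ) ≤ (m : ℝ) + ℓ := by
            have : m + ℓ - i ≤ m + ℓ := by omega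
            exact_mod_cast this
          have hpq : (i : ℝ) * ((m + ℓ - i : ℕ) : ℝ) ≤ ((m : ℝ) + ℓ) ^ 2 := by
            nlinarith [Nat.cast_nonneg (α := ℝ) i, Nat.cast_nonneg (α := ℝ) (m + ℓ - i)]
          have hprodnn : 0 ≤ u i s * u (m + ℓ - i) s := mul_nonneg hui.1 huq.1
          calc (i : ℝ) * ((m + ℓ - i : ℕ) : ℝ) * u i s * u (m + ℓ - i) s
              = ((i : ℝ) * ((m + ℓ - i : ℕ) : ℝ)) * (u i s * u (m + ℓ - i) s) := by ring
            _ ≤ ((m : ℝ) + ℓ) ^ 2 * (Cf i * s ^ (k + 1)) :=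
                mul_le_mul hpq hib hprodnn (by positivity)
            _ = ((m : ℝ) + ℓ) ^ 2 * Cf i * s ^ (k + 1) := by ring
        calc (∑ i ∈ Finset.Icc (ℓ + 1) (m - 1),
              (i : ℝ) * ((m + ℓ - i : ℕ) : ℝ) * u i s * u (m + ℓ - i) s)
            ≤ ∑ i ∈ Finset.Icc (ℓ + 1) (m - 1), ((m : ℝ) + ℓ) ^ 2 * Cf i * s ^ (k + 1) :=
              Finset.sum_le_sum hterm
          _ = D * s ^ (k + 1) := by rw [hDdef, Finset.sum_mul]
      have hb := grow_bound' ℓ T u hsol.mem hsol.contDiff hsol.ode hT'0 hT'T hm hm' hm0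
        hD0 hS
      exact ⟨4 * D, by positivity, fun t ht => hb t ht⟩
  obtain ⟨C, hC0, hCb⟩ := key j n hn hnA
  have habs : ∀ t ∈ Set.Icc (0:ℝ) T', |u n t| ≤ C * t ^ (j + 1) := by
    intro t ht
    rw [abs_of_nonneg (hsol.mem n hn t ⟨ht.1, ht.2.trans hT'T⟩).1]
    exact hCb t ht
  exact vanish_of_bound' hT (hsmooth n hn) hT'0 hT'T habs j le_rfl
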